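/- Let E be an n×n integer matrix with det E ≠ 0, let q ∈ ℚⁿ satisfy E(q₁,…,qₙ)ᵀ = (1,…,1)ᵀ, and let g₀ = (exp(2πi q₁),…,exp(2πi qₙ)) ∈ G_f. Then for every λ ∈ G_{f̃}, one has ⟨λ, g₀⟩_E = 1 if and only if Π_{j=1}^n λ_j = 1. Equivalently, the dual subgroup of the cyclic subgroup G_{f,0} = ⟨g₀⟩ ⊆ G_f equals G_{f̃} ∩ SL(n, ℂ) (viewing elements of G_{f̃} as diagonal matrices). -/

import Mathlib

/-!
Write `e[r] = exp (2πi r)`. Since `E q = 𝟙`, the pairing of `λ = e[α]` with `g₀ = e[q]` is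
`e[α E q] = e[∑ αᵢ] = ∏ λᵢ`. Conversely, `λ ∈ G_{f̃}` means that `α E` is integral, so the
pairing of `λ` with any `μ = e[β]` equals `∏ μⱼ ^ (α E)ⱼ`; for `μ = g₀ ^ m` this is the `m`-th
power of the pairing with `g₀`. Rational exponents `α` exist because `λ ^ det E = 1`
(multiply the defining relations by the adjugate of `E`).
-/

open Complex Matrix

noncomputable section

/-- The group `G_f` of diagonal symmetries of the invertible polynomial with exponent
matrix `E`, as a subgroup of the torus `(ℂˣ)ⁿ`. (The symmetry group `G_{f̃}` of the
Berglund–Hübsch transpose is then `Gf Eᵀ`.) -/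
def Gf {n : ℕ} (E : Matrix (Fin n) (Fin n) ℤ) : Subgroup (Fin n → ℂˣ) where
  carrier := {μ | ∀ i, ∏ j, μ j ^ E i j = 1}
  one_mem' := by intro i; simp
  mul_mem' := by
    intro a b ha hb i
    simp only [Pi.mul_apply, mul_zpow, Finset.prod_mul_distrib, ha i, hb i, mul_one]
  inv_mem' := by
    intro a ha i
    simp only [Pi.inv_apply, _root_.inv_zpow, Finset.prod_inv_distrib, ha i, inv_one]

/-- The exponential grading (monodromy) element `g₀ = (exp(2πi q₁), …, exp(2πi qₙ))`. -/
def gZero {n : ℕ} (q : Fin n → ℚ) : Fin n → ℂˣ :=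
  fun j => Units.mk0 (Complex.exp (2 * (Real.pi : ℂ) * Complex.I * (q j : ℂ)))
    (Complex.exp_ne_zero _)

local notation "e[" r "]" => Complex.exp (2 * (Real.pi : ℂ) * Complex.I * ((r : ℚ) : ℂ))

lemma exp_rat_eq_one_iff (r : ℚ) : e[r] = 1 ↔ ∃ k : ℤ, r = k := by
  have h2πI : 2 * (Real.pi : ℂ) * I ≠ 0 := by simp [Real.pi_ne_zero, I_ne_zero]
  rw [Complex.exp_eq_one_iff]
  refine exists_congr fun k => ?_
  rw [mul_comm (k : ℂ), mul_right_inj' h2πI]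
  exact_mod_cast Iff.rfl

lemma exp_rat_sum {ι : Type*} (s : Finset ι) (r : ι → ℚ) :
    e[∑ i ∈ s, r i] = ∏ i ∈ s, e[r i] := by
  rw [← Complex.exp_sum]
  push_cast
  rw [Finset.mul_sum]

lemma coe_prod_zpow_eq_exp {ι : Type*} [Fintype ι] {μ : ι → ℂˣ} {β : ι → ℚ}
    (hβ : ∀ j, (μ j : ℂ) = e[β j]) (c : ι → ℤ) :
    ((∏ j, μ j ^ c j : ℂˣ) : ℂ) = e[∑ j, c j * β j] := by
  rw [exp_rat_sum, Units.coe_prod]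
  refine Finset.prod_congr rfl fun j _ => ?_
  rw [Units.val_zpow_eq_zpow_val, hβ, ← Complex.exp_int_mul]
  push_cast
  ring_nf

lemma zpow_finset_sum {G ι : Type*} [CommGroup G] (x : G) (s : Finset ι) (f : ι → ℤ) :
    x ^ (∑ i ∈ s, f i) = ∏ i ∈ s, x ^ f i := by
  induction s using Finset.cons_induction with
  | empty => simp
  | cons a s ha ih => rw [Finset.sum_cons, Finset.prod_cons, _root_.zpow_add, ih]

lemma zpow_det_eq_one {G ι : Type*} [CommGroup G] [Fintype ι] [DecidableEq ι]
    {E : Matrix ι ι ℤ} {μ : ι → G} (hμ : ∀ i, ∏ j, μ j ^ E i j = 1) (k : ι) :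
    μ k ^ E.det = 1 :=
  calc μ k ^ E.det = ∏ j, μ j ^ (E.adjugate * E) k j := by
        simp [adjugate_mul, Matrix.one_apply]
    _ = ∏ i, (∏ j, μ j ^ E i j) ^ E.adjugate k i := by
        simp only [mul_apply, zpow_finset_sum, ← Finset.prod_zpow, ← _root_.zpow_mul]
        rw [Finset.prod_comm]
        exact Finset.prod_congr rfl fun j _ => Finset.prod_congr rfl fun i _ => by rw [mul_comm]
    _ = 1 := by simp [hμ]

lemma exists_rat_exp_eq_of_zpow_eq_one {u : ℂˣ} {d : ℤ} (hd : d ≠ 0) (hu : u ^ d = 1) :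
    ∃ r : ℚ, (u : ℂ) = e[r] := by
  have : NeZero d.natAbs := ⟨Int.natAbs_ne_zero.2 hd⟩
  have hroot : u ∈ rootsOfUnity d.natAbs ℂ :=
    (_root_.mem_rootsOfUnity _ _).2 (pow_natAbs_eq_one.2 hu)
  obtain ⟨i, -, hi⟩ := (Complex.mem_rootsOfUnity _ u).1 hroot
  exact ⟨i / d.natAbs, by rw [← hi]; push_cast; rfl⟩

section Gf

variable {n : ℕ} {E : Matrix (Fin n) (Fin n) ℤ}

lemma mem_Gf_iff_of_exp {μ : Fin n → ℂˣ} {β : Fin n → ℚ} (hβ : ∀ j, (μ j : ℂ) = e[β j]) :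
    μ ∈ Gf E ↔ ∀ i, ∃ k : ℤ, ∑ j, (E i j : ℚ) * β j = k := by
  refine forall_congr' fun i => ?_
  rw [← Units.val_eq_one, coe_prod_zpow_eq_exp hβ, exp_rat_eq_one_iff]

lemma coe_gZero (q : Fin n → ℚ) (j : Fin n) : (gZero q j : ℂ) = e[q j] := rfl

lemma gZero_mem_Gf {q : Fin n → ℚ} (hq : ∀ i, ∑ j, (E i j : ℚ) * q j = 1) : gZero q ∈ Gf E :=
  (mem_Gf_iff_of_exp (coe_gZero q)).2 fun i => ⟨1, by simp [hq i]⟩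

lemma exists_rat_exp_eq_of_mem_Gf (hE : E.det ≠ 0) {μ : Fin n → ℂˣ} (hμ : μ ∈ Gf E) :
    ∃ α : Fin n → ℚ, ∀ j, (μ j : ℂ) = e[α j] :=
  ⟨_, fun j => (exists_rat_exp_eq_of_zpow_eq_one hE (zpow_det_eq_one hμ j)).choose_spec⟩

end Gf

section Pairing

variable {ι : Type*} [Fintype ι] {E : Matrix ι ι ℤ}

lemma sum_sum_mul_weights {q : ι → ℚ} (hq : ∀ i, ∑ j, (E i j : ℚ) * q j = 1) (α : ι → ℚ) :
    ∑ i, ∑ j, α i * (E i j : ℚ) * q j = ∑ i, α i := by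
  simp_rw [mul_assoc, ← Finset.mul_sum, hq, mul_one]

lemma exp_pairing_weights {q : ι → ℚ} (hq : ∀ i, ∑ j, (E i j : ℚ) * q j = 1)
    {lam : ι → ℂˣ} {α : ι → ℚ} (hα : ∀ j, (lam j : ℂ) = e[α j]) :
    e[∑ i, ∑ j, α i * (E i j : ℚ) * q j] = ∏ j, (lam j : ℂ) := by
  rw [sum_sum_mul_weights hq, exp_rat_sum]
  exact Finset.prod_congr rfl fun j _ => (hα j).symm

lemma exp_pairing_eq_coe_prod {μ : ι → ℂˣ} {α β : ι → ℚ} (hβ : ∀ j, (μ j : ℂ) = e[β j])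
    {c : ι → ℤ} (hc : ∀ j, ∑ i, (E i j : ℚ) * α i = c j) :
    e[∑ i, ∑ j, α i * (E i j : ℚ) * β j] = ((∏ j, μ j ^ c j : ℂˣ) : ℂ) := by
  rw [coe_prod_zpow_eq_exp hβ, Finset.sum_comm]
  simp_rw [← hc, Finset.sum_mul, mul_comm (α _)]

end Pairing

lemma exp_pairing_zpow_gZero_eq_one {n : ℕ} {E : Matrix (Fin n) (Fin n) ℤ} {q : Fin n → ℚ}
    (hq : ∀ i, ∑ j, (E i j : ℚ) * q j = 1) {lam : Fin n → ℂˣ} (hlam : lam ∈ Gf Eᵀ)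
    (hdet : ∏ j, (lam j : ℂ) = 1) (m : ℤ) {α β : Fin n → ℚ}
    (hα : ∀ j, (lam j : ℂ) = e[α j]) (hβ : ∀ j, ((gZero q j ^ m : ℂˣ) : ℂ) = e[β j]) :
    e[∑ i, ∑ j, α i * (E i j : ℚ) * β j] = 1 := by
  choose c hc using (mem_Gf_iff_of_exp hα).1 hlam
  simp only [transpose_apply] at hc
  have hg₀ : ((∏ j, gZero q j ^ c j : ℂˣ) : ℂ) = 1 := by
    rw [← exp_pairing_eq_coe_prod (coe_gZero q) hc, exp_pairing_weights hq hα, hdet]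
  rw [exp_pairing_eq_coe_prod hβ hc]
  simp_rw [← _root_.zpow_mul, mul_comm m, _root_.zpow_mul, Finset.prod_zpow]
  rw [Units.val_zpow_eq_zpow_val, hg₀, _root_.one_zpow]

/-- For `λ ∈ G_{f̃}`, one has `⟨λ, g₀⟩_E = 1` iff `∏ j, λ j = 1`.
Equivalently, the dual subgroup of `G_{f,0} = ⟨g₀⟩ ⊆ G_f` equals
`G_{f̃} ∩ SL(n, ℂ)` (viewing elements of `G_{f̃}` as diagonal matrices). -/
theorem stmt12 (n : ℕ) (E : Matrix (Fin n) (Fin n) ℤ) (hE : E.det ≠ 0)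
    (q : Fin n → ℚ) (hq : ∀ i, ∑ j, (E i j : ℚ) * q j = 1) :
    (∀ lam : Fin n → ℂˣ, lam ∈ Gf Eᵀ → ∀ α : Fin n → ℚ,
      (∀ j, ((lam j : ℂˣ) : ℂ)
          = Complex.exp (2 * (Real.pi : ℂ) * Complex.I * (α j : ℂ))) →
      (Complex.exp (2 * (Real.pi : ℂ) * Complex.I *
          ((∑ i, ∑ j, α i * (E i j : ℚ) * q j : ℚ) : ℂ)) = 1
        ↔ ∏ j, ((lam j : ℂˣ) : ℂ) = 1)) ∧
    {lam : Fin n → ℂˣ | lam ∈ Gf Eᵀ ∧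
        ∀ mu : Fin n → ℂˣ, mu ∈ Gf E → (∃ m : ℤ, mu = fun j => gZero q j ^ m) →
          ∀ α β : Fin n → ℚ,
            (∀ j, ((lam j : ℂˣ) : ℂ)
                = Complex.exp (2 * (Real.pi : ℂ) * Complex.I * (α j : ℂ))) →
            (∀ j, ((mu j : ℂˣ) : ℂ)
                = Complex.exp (2 * (Real.pi : ℂ) * Complex.I * (β j : ℂ))) →
            Complex.exp (2 * (Real.pi : ℂ) * Complex.I *
                ((∑ i, ∑ j, α i * (E i j : ℚ) * β j : ℚ) : ℂ)) = 1}
      = {lam : Fin n → ℂˣ | lam ∈ Gf Eᵀ ∧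
          (Matrix.diagonal fun j => ((lam j : ℂˣ) : ℂ)).det = 1} := by
  refine ⟨fun lam _ α hα => by rw [exp_pairing_weights hq hα], ?_⟩
  ext lam
  simp only [Set.mem_ofPred_eq, det_diagonal, and_congr_right_iff]
  intro hlam
  constructor
  · intro hdual
    obtain ⟨α, hα⟩ := exists_rat_exp_eq_of_mem_Gf (by rwa [det_transpose]) hlam
    rw [← exp_pairing_weights hq hα]
    exact hdual _ (gZero_mem_Gf hq) ⟨1, by simp⟩ α q hα (coe_gZero q)
  · rintro hdet mu - ⟨m, rfl⟩ α β hα hβ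
    exact exp_pairing_zpow_gZero_eq_one hq hlam hdet m hα hβ

end
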